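/- Let G be the graph on vertex set A ∪ B where A = {a_1,...,a_n}, B = {b_1,...,b_n} (n ≥ 2), A and B induce cliques, a_i ~ b_i for every i, and additionally a_1 ~ b_j and b_1 ~ a_j for all j (vertex 1 of each half is joined to every vertex of the other half). Then for every set S with |S| ≤ n, G minus S is connected. -/

import Mathlib

/-!
Both halves are cliques, so `G - S` is connected once it is nonempty and either lies in one half
or keeps an edge between the halves. If it keeps vertices `a_i`, `b_j` on both sides but no such
edge, then `S` meets every matching edge `a_k b_k` and contains `a_1` and `b_1` (adjacent to `b_j`
and `a_i` respectively), so `|S| ≥ n + 1`.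
-/

open Classical SimpleGraph

/-- The `f = 1` construction: two cliques `A = {a_1, …, a_n}` (left summand) and
`B = {b_1, …, b_n}` (right summand), the perfect matching `a_i ~ b_i`, and all edges
from `a_1` to `B` and from `b_1` to `A`. -/
def hubCliques (n : ℕ) : SimpleGraph (Fin n ⊕ Fin n) where
  Adj x y := x ≠ y ∧
    match x, y with
    | .inl _, .inl _ => True
    | .inr _, .inr _ => True
    | .inl i, .inr j => i = j ∨ (i : ℕ) = 0 ∨ (j : ℕ) = 0
    | .inr i, .inl j => i = j ∨ (i : ℕ) = 0 ∨ (j : ℕ) = 0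
  symm := ⟨by
    rintro (i | i) (j | j) ⟨hne, h⟩ <;>
      exact ⟨hne.symm, by simp_all <;> tauto⟩⟩
  loopless := ⟨by rintro (i | i) ⟨hne, _⟩ <;> exact hne rfl⟩

namespace SimpleGraph

variable {V : Type*} {G : SimpleGraph V} {s t : Set V}

lemma IsClique.induce_connected (hs : G.IsClique s) (hne : s.Nonempty) :
    (G.induce s).Connected := by
  have := hne.to_subtype
  rw [induce_eq_top.mpr hs]
  exact connected_top

lemma induce_union_connected_of_isClique (hs : G.IsClique s) (ht : G.IsClique t) {a b : V}
    (ha : a ∈ s) (hb : b ∈ t) (hab : G.Adj a b) : (G.induce (s ∪ t)).Connected := by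
  have hsab : (G.induce (s ∪ {a, b})).Connected :=
    induce_union_connected (hs.induce_connected ⟨a, ha⟩).preconnected
      (induce_pair_connected_of_adj hab).preconnected ⟨a, ha, by simp⟩
  have hst : s ∪ {a, b} ∪ t = s ∪ t := by
    ext x
    simp only [Set.mem_union, Set.mem_insert_iff, Set.mem_singleton_iff]
    grind
  rw [← hst]
  exact induce_union_connected hsab.preconnected (ht.induce_connected ⟨b, hb⟩).preconnected
    ⟨b, by simp, hb⟩

end SimpleGraph

lemma Finset.card_lt_of_forall_inl_mem_or_inr_mem {α : Type*} [Fintype α]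
    {S : Finset (α ⊕ α)} (hpair : ∀ i, .inl i ∈ S ∨ .inr i ∈ S) {i₀ : α}
    (hl : .inl i₀ ∈ S) (hr : .inr i₀ ∈ S) : Fintype.card α < S.card := by
  have hcover : S.toLeft ∪ S.toRight = Finset.univ := by
    ext i
    simpa using hpair i
  have hinter : i₀ ∈ S.toLeft ∩ S.toRight := by simp [hl, hr]
  rw [← Finset.card_toLeft_add_card_toRight, ← Finset.card_union_add_card_inter, hcover,
    Finset.card_univ]
  have := Finset.card_pos.mpr ⟨i₀, hinter⟩
  omega

section hubCliques

variable {n : ℕ}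

lemma hubCliques_isClique_range_inl : (hubCliques n).IsClique (Set.range Sum.inl) := by
  rintro _ ⟨i, rfl⟩ _ ⟨j, rfl⟩ hij
  exact ⟨hij, trivial⟩

lemma hubCliques_isClique_range_inr : (hubCliques n).IsClique (Set.range Sum.inr) := by
  rintro _ ⟨i, rfl⟩ _ ⟨j, rfl⟩ hij
  exact ⟨hij, trivial⟩

lemma hubCliques_adj_inl_inr {i j : Fin n} (h : i = j ∨ (i : ℕ) = 0 ∨ (j : ℕ) = 0) :
    (hubCliques n).Adj (.inl i) (.inr j) :=
  ⟨Sum.inl_ne_inr, h⟩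

lemma hubCliques_exists_adj_inl_inr_of_card_le {S : Finset (Fin n ⊕ Fin n)} (hS : S.card ≤ n)
    {i₀ j₀ : Fin n} (hi₀ : .inl i₀ ∉ S) (hj₀ : .inr j₀ ∉ S) :
    ∃ i j, .inl i ∉ S ∧ .inr j ∉ S ∧ (hubCliques n).Adj (.inl i) (.inr j) := by
  by_contra! h
  let hub : Fin n := ⟨0, i₀.pos⟩
  have hpair : ∀ i, .inl i ∈ S ∨ .inr i ∈ S := by
    intro i
    by_contra! hi
    exact h i i hi.1 hi.2 (hubCliques_adj_inl_inr (.inl rfl))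
  have hl : .inl hub ∈ S := by
    by_contra hhub
    exact h hub j₀ hhub hj₀ (hubCliques_adj_inl_inr (.inr (.inl rfl)))
  have hr : .inr hub ∈ S := by
    by_contra hhub
    exact h i₀ hub hi₀ hhub (hubCliques_adj_inl_inr (.inr (.inr rfl)))
  have := Finset.card_lt_of_forall_inl_mem_or_inr_mem hpair hl hr
  simp only [Fintype.card_fin] at this
  omega

end hubCliques

/-- In the `f = 1` construction (two `n`-cliques, a perfect matching, and
the first vertex of each half joined to every vertex of the other half), removing any
set of at most `n` vertices leaves a connected graph. -/
theorem stmt16 (n : ℕ) (hn : 2 ≤ n) :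
    ∀ S : Finset (Fin n ⊕ Fin n), S.card ≤ n →
      ((hubCliques n).induce ((S : Set (Fin n ⊕ Fin n))ᶜ)).Connected := by
  intro S hS
  obtain ⟨x, hx⟩ : ∃ x, x ∉ S := by
    by_contra! hall
    rw [Finset.eq_univ_of_forall hall, Finset.card_univ, Fintype.card_sum, Fintype.card_fin]
      at hS
    omega
  by_cases hL : ∀ i, .inl i ∈ S
  · refine (hubCliques_isClique_range_inr.subset ?_).induce_connected ⟨x, hx⟩
    rintro (i | j) hk
    · exact absurd (hL i) hk
    · exact ⟨j, rfl⟩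
  by_cases hR : ∀ j, .inr j ∈ S
  · refine (hubCliques_isClique_range_inl.subset ?_).induce_connected ⟨x, hx⟩
    rintro (i | j) hk
    · exact ⟨i, rfl⟩
    · exact absurd (hR j) hk
  push Not at hL hR
  obtain ⟨i₀, hi₀⟩ := hL
  obtain ⟨j₀, hj₀⟩ := hR
  obtain ⟨i, j, hi, hj, hadj⟩ := hubCliques_exists_adj_inl_inr_of_card_le hS hi₀ hj₀
  have hsplit : (S : Set (Fin n ⊕ Fin n))ᶜ =
      ((S : Set _)ᶜ ∩ Set.range Sum.inl) ∪ ((S : Set _)ᶜ ∩ Set.range Sum.inr) := by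
    ext (k | k) <;> simp
  rw [hsplit]
  exact induce_union_connected_of_isClique
    (hubCliques_isClique_range_inl.subset Set.inter_subset_right)
    (hubCliques_isClique_range_inr.subset Set.inter_subset_right)
    ⟨hi, i, rfl⟩ ⟨hj, j, rfl⟩ hadj
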